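/- arXiv:1410.1390 — 3 statements merged into one kernel-verified Lean document; each statement's English description precedes it below -/
import Mathlib

section
/- (Lemma 2.1) Let the sequences {x_k^t}, {x_0^t}, {y_k^t} be generated by the flexible ADMM (Algorithm 2) for the consensus problem, with an arbitrary choice of index sets C^{t+1}. Then for every t ≥ 1 and every k ∈ {1,…,K}: (i) ∇g_k(x_k^{t+1}) = −y_k^{t+1}, and (ii) L_k² ‖x_k^{t+1} − x_k^t‖² ≥ ‖y_k^{t+1} − y_k^t‖². -/
open Filter
open scoped RealInnerProductSpace BigOperators

/-!
Each block update `x_k^{t+1}` minimises the smooth function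
`g_k(x) + ⟨y_k^t, x − x_0^{t+1}⟩ + (ρ_k/2)‖x − x_0^{t+1}‖²` over the whole space, so its gradient
vanishes there; this is `∇g_k(x_k^{t+1}) = −(y_k^t + ρ_k(x_k^{t+1} − x_0^{t+1})) = −y_k^{t+1}`.
A block that is not updated keeps both `x_k` and `y_k`, so the identity propagates from the
last update, and every block is updated at the first iteration because `C¹ = {0,…,K}`.
Part (ii) is then the Lipschitz continuity of `∇g_k`, since `y_k^{t+1} − y_k^t` is the
difference of two gradients.
-/

/-- Augmented Lagrangian for the reformulated consensus problem:
`L({x_k}, x_0; y) = Σ_k g_k(x_k) + h(x_0) + Σ_k ⟨y_k, x_k − x_0⟩ + Σ_k (ρ_k/2)‖x_k − x_0‖²`. -/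
noncomputable def augL {N K : ℕ} (g : Fin K → EuclideanSpace ℝ (Fin N) → ℝ)
    (h : EuclideanSpace ℝ (Fin N) → ℝ) (ρ : Fin K → ℝ)
    (xk : Fin K → EuclideanSpace ℝ (Fin N)) (x0 : EuclideanSpace ℝ (Fin N))
    (y : Fin K → EuclideanSpace ℝ (Fin N)) : ℝ :=
  (∑ k, g k (xk k)) + h x0 + (∑ k, ⟪y k, xk k - x0⟫)
    + ∑ k, ρ k / 2 * ‖xk k - x0‖ ^ 2

open InnerProductSpace

section Gradient

variable {E : Type*} [NormedAddCommGroup E] [InnerProductSpace ℝ E] [CompleteSpace E]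
  {f g : E → ℝ} {f' g' x : E}

theorem HasGradientAt.add (hf : HasGradientAt f f' x) (hg : HasGradientAt g g' x) :
    HasGradientAt (fun z => f z + g z) (f' + g') x := by
  rw [hasGradientAt_iff_hasFDerivAt, map_add]
  exact hf.hasFDerivAt.add hg.hasFDerivAt

theorem IsLocalMin.hasGradientAt_eq_zero (hmin : IsLocalMin f x) (hf : HasGradientAt f f' x) :
    f' = 0 :=
  (toDual ℝ E).map_eq_zero_iff.mp (hmin.hasFDerivAt_eq_zero hf.hasFDerivAt)

theorem hasGradientAt_inner_sub_add_norm_sub_sq (y c : E) (ρ : ℝ) (x : E) :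
    HasGradientAt (fun z => ⟪y, z - c⟫ + ρ / 2 * ‖z - c‖ ^ 2) (y + ρ • (x - c)) x := by
  have hsub := (hasFDerivAt_id (𝕜 := ℝ) x).sub_const c
  rw [hasGradientAt_iff_hasFDerivAt]
  refine (((hasFDerivAt_const y x).inner ℝ hsub).add
    (hsub.norm_sq.const_mul (ρ / 2))).congr_fderiv ?_
  ext v
  simp [fderivInnerCLM_apply, ← mul_assoc]

theorem HasGradientAt.eq_neg_of_forall_prox_le {y c : E} {ρ : ℝ} (hf : HasGradientAt f f' x)
    (hmin : ∀ z, f x + ⟪y, x - c⟫ + ρ / 2 * ‖x - c‖ ^ 2 ≤ f z + ⟪y, z - c⟫ + ρ / 2 * ‖z - c‖ ^ 2) :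
    f' = -(y + ρ • (x - c)) := by
  have hloc : IsLocalMin (fun z => f z + (⟪y, z - c⟫ + ρ / 2 * ‖z - c‖ ^ 2)) x :=
    Eventually.of_forall fun z => by simpa only [add_assoc] using hmin z
  exact eq_neg_of_add_eq_zero_left
    (hloc.hasGradientAt_eq_zero (hf.add (hasGradientAt_inner_sub_add_norm_sub_sq y c ρ x)))

end Gradient

section BlockUpdate

variable {E : Type*} [NormedAddCommGroup E] [InnerProductSpace ℝ E] [CompleteSpace E]
  {g : E → ℝ} {g' : E → E} {ρ : ℝ} {xk x0 yk : ℕ → E} {upd : ℕ → Prop}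

/-- One block of the flexible ADMM: `upd t` says that the block is updated at iteration `t + 1`. -/
theorem gradient_eq_neg_dual_of_blockUpdate (hgrad : ∀ z, HasGradientAt g (g' z) z)
    (hupd : upd 0)
    (hx : ∀ t, upd t → ∀ z, g (xk (t + 1)) + ⟪yk t, xk (t + 1) - x0 (t + 1)⟫
        + ρ / 2 * ‖xk (t + 1) - x0 (t + 1)‖ ^ 2
      ≤ g z + ⟪yk t, z - x0 (t + 1)⟫ + ρ / 2 * ‖z - x0 (t + 1)‖ ^ 2)
    (hxkeep : ∀ t, ¬upd t → xk (t + 1) = xk t)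
    (hy : ∀ t, upd t → yk (t + 1) = yk t + ρ • (xk (t + 1) - x0 (t + 1)))
    (hykeep : ∀ t, ¬upd t → yk (t + 1) = yk t) :
    ∀ s, 1 ≤ s → g' (xk s) = -yk s := by
  have hstep : ∀ t, upd t → g' (xk (t + 1)) = -yk (t + 1) := fun t ht => by
    rw [hy t ht]
    exact (hgrad _).eq_neg_of_forall_prox_le (hx t ht)
  intro s hs
  induction s, hs using Nat.le_induction with
  | base => exact hstep 0 hupd
  | succ t _ ih =>
    by_cases ht : upd t
    · exact hstep t ht
    · rw [hxkeep t ht, hykeep t ht, ih]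

end BlockUpdate

theorem lemma2_1_general
    {N K : ℕ}
    (g : Fin K → EuclideanSpace ℝ (Fin N) → ℝ)
    (g' : Fin K → EuclideanSpace ℝ (Fin N) → EuclideanSpace ℝ (Fin N))
    (Lg ρ : Fin K → ℝ)
    (x : ℕ → Fin K → EuclideanSpace ℝ (Fin N))
    (x0 : ℕ → EuclideanSpace ℝ (Fin N))
    (y : ℕ → Fin K → EuclideanSpace ℝ (Fin N))
    (C : ℕ → Finset (Option (Fin K)))
    -- data assumptions
    (hgrad : ∀ k z, HasGradientAt (g k) (g' k z) z)
    (hLip : ∀ k u v, ‖g' k u - g' k v‖ ≤ Lg k * ‖u - v‖)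
    -- Algorithm 2
    (hC1 : C 1 = Finset.univ)
    (hxupd : ∀ (t : ℕ) (k : Fin K),
      (some k ∈ C (t + 1) → ∀ z : EuclideanSpace ℝ (Fin N),
        g k (x (t + 1) k) + ⟪y t k, x (t + 1) k - x0 (t + 1)⟫
            + ρ k / 2 * ‖x (t + 1) k - x0 (t + 1)‖ ^ 2
          ≤ g k z + ⟪y t k, z - x0 (t + 1)⟫ + ρ k / 2 * ‖z - x0 (t + 1)‖ ^ 2) ∧
      (some k ∉ C (t + 1) → x (t + 1) k = x t k))
    (hyupd : ∀ (t : ℕ) (k : Fin K),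
      (some k ∈ C (t + 1) → y (t + 1) k = y t k + ρ k • (x (t + 1) k - x0 (t + 1))) ∧
      (some k ∉ C (t + 1) → y (t + 1) k = y t k)) :
    ∀ t : ℕ, 1 ≤ t → ∀ k : Fin K,
      g' k (x (t + 1) k) = -(y (t + 1) k) ∧
      ‖y (t + 1) k - y t k‖ ^ 2 ≤ (Lg k) ^ 2 * ‖x (t + 1) k - x t k‖ ^ 2 := by
  intro t ht k
  have hdual := gradient_eq_neg_dual_of_blockUpdate (xk := fun t => x t k) (yk := fun t => y t k)
    (upd := fun t => some k ∈ C (t + 1)) (hgrad k) (by simp [hC1])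
    (fun t => (hxupd t k).1) (fun t => (hxupd t k).2) (fun t => (hyupd t k).1) (fun t => (hyupd t k).2)
  refine ⟨hdual (t + 1) (by omega), ?_⟩
  calc ‖y (t + 1) k - y t k‖ ^ 2 = ‖g' k (x (t + 1) k) - g' k (x t k)‖ ^ 2 := by
        rw [hdual (t + 1) (by omega), hdual t ht, ← norm_neg, neg_sub_neg, neg_sub]
    _ ≤ (Lg k * ‖x (t + 1) k - x t k‖) ^ 2 := by gcongr; exact hLip k _ _
    _ = Lg k ^ 2 * ‖x (t + 1) k - x t k‖ ^ 2 := mul_pow _ _ _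

/-- **Lemma 2.1.**  For the flexible ADMM (Algorithm 2) on the consensus problem,
for every `t ≥ 1` and every block `k`:
(i) `∇g_k(x_k^{t+1}) = −y_k^{t+1}`, and
(ii) `L_k² ‖x_k^{t+1} − x_k^t‖² ≥ ‖y_k^{t+1} − y_k^t‖²`. -/
theorem lemma2_1
    {N K : ℕ} (hK : 1 ≤ K)
    (g : Fin K → EuclideanSpace ℝ (Fin N) → ℝ)
    (g' : Fin K → EuclideanSpace ℝ (Fin N) → EuclideanSpace ℝ (Fin N))
    (h : EuclideanSpace ℝ (Fin N) → ℝ)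
    (X : Set (EuclideanSpace ℝ (Fin N)))
    (Lg ρ : Fin K → ℝ)
    (x : ℕ → Fin K → EuclideanSpace ℝ (Fin N))
    (x0 : ℕ → EuclideanSpace ℝ (Fin N))
    (y : ℕ → Fin K → EuclideanSpace ℝ (Fin N))
    (C : ℕ → Finset (Option (Fin K)))
    -- data assumptions
    (hgrad : ∀ k z, HasGradientAt (g k) (g' k z) z)
    (hLpos : ∀ k, 0 < Lg k)
    (hLip : ∀ k u v, ‖g' k u - g' k v‖ ≤ Lg k * ‖u - v‖)
    (hconv : ConvexOn ℝ Set.univ h)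
    (hXne : X.Nonempty) (hXcl : IsClosed X) (hXcv : Convex ℝ X)
    (hρ : ∀ k, 0 < ρ k)
    -- Algorithm 2
    (hC1 : C 1 = Finset.univ)
    (hx0upd : ∀ t : ℕ,
      (none ∈ C (t + 1) → x0 (t + 1) ∈ X ∧ ∀ z ∈ X,
        augL g h ρ (x t) (x0 (t + 1)) (y t) ≤ augL g h ρ (x t) z (y t)) ∧
      (none ∉ C (t + 1) → x0 (t + 1) = x0 t))
    (hxupd : ∀ (t : ℕ) (k : Fin K),
      (some k ∈ C (t + 1) → ∀ z : EuclideanSpace ℝ (Fin N),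
        g k (x (t + 1) k) + ⟪y t k, x (t + 1) k - x0 (t + 1)⟫
            + ρ k / 2 * ‖x (t + 1) k - x0 (t + 1)‖ ^ 2
          ≤ g k z + ⟪y t k, z - x0 (t + 1)⟫ + ρ k / 2 * ‖z - x0 (t + 1)‖ ^ 2) ∧
      (some k ∉ C (t + 1) → x (t + 1) k = x t k))
    (hyupd : ∀ (t : ℕ) (k : Fin K),
      (some k ∈ C (t + 1) → y (t + 1) k = y t k + ρ k • (x (t + 1) k - x0 (t + 1))) ∧
      (some k ∉ C (t + 1) → y (t + 1) k = y t k)) :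
    ∀ t : ℕ, 1 ≤ t → ∀ k : Fin K,
      g' k (x (t + 1) k) = -(y (t + 1) k) ∧
      ‖y (t + 1) k - y t k‖ ^ 2 ≤ (Lg k) ^ 2 * ‖x (t + 1) k - x t k‖ ^ 2 :=
  lemma2_1_general g g' Lg ρ x x0 y C hgrad hLip hC1 hxupd hyupd
end

section
/- (Lemma 2.3) Let the sequences {x_k^t}, {x_0^t}, {y_k^t} be generated by the flexible ADMM (Algorithm 2) for the consensus problem, with an arbitrary choice of index sets C^{t+1}, and suppose Assumptions A1, A2, A3 hold. Then for every t ≥ 1: L({x_k^{t+1}}, x_0^{t+1}; y^{t+1}) ≥ f(x_0^{t+1}) ≥ f̄. Consequently, under the period-T essentially cyclic rule the sequence t ↦ L({x_k^t}, x_0^t; y^t) is nonincreasing for t ≥ 1 and converges to a limit that is greater than or equal to f̄. -/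
/-!
Each block update is a proximal step, so its optimality condition forces `y_k = -∇g_k(x_k)` as
soon as block `k` has been updated once, which `C¹ = {0, …, K}` guarantees from `t = 1` on.
With this identity the descent lemma for `g_k` and `ρ_k ≥ L_k` give
`g_k(x₀) ≤ g_k(x_k) + ⟨y_k, x_k - x₀⟩ + ρ_k/2 ‖x_k - x₀‖²`, i.e. `L ≥ f(x₀)`, and `f(x₀) ≥ f̄`
since `x₀ ∈ X` from `t = 1` on.
For the decrease, the `x₀`-step cannot increase `L`; a block step lowers its term by at least
`γ_k/2 ‖x_k⁺ - x_k‖²` (strong convexity of the subproblem at its minimiser), while the dual step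
raises it by `ρ_k ‖x_k⁺ - x₀‖² = ‖y_k⁺ - y_k‖² / ρ_k ≤ L_k²/ρ_k ‖x_k⁺ - x_k‖²`, which is smaller
because `2 L_k² < ρ_k γ_k`. A nonincreasing sequence bounded below by `f̄` converges.
-/

open Filter
open scoped RealInnerProductSpace BigOperators

section InnerProductSpace

variable {E : Type*} [NormedAddCommGroup E] [InnerProductSpace ℝ E]

theorem le_add_inner_add_sq_of_lipschitz_gradient [CompleteSpace E] {g : E → ℝ} {g' : E → E}
    {L : ℝ} (hg : ∀ z, HasGradientAt g (g' z) z) (hLip : ∀ u v, ‖g' u - g' v‖ ≤ L * ‖u - v‖)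
    (u v : E) :
    g v ≤ g u + ⟪g' u, v - u⟫ + L / 2 * ‖v - u‖ ^ 2 := by
  set w := v - u
  let φ : ℝ → ℝ := fun s => g (u + s • w) - s * ⟪g' u, w⟫ - L / 2 * s ^ 2 * ‖w‖ ^ 2
  have hφ : ∀ s, HasDerivAt φ (⟪g' (u + s • w), w⟫ - ⟪g' u, w⟫ - L * s * ‖w‖ ^ 2) s := by
    intro s
    have hline : HasDerivAt (fun s : ℝ => u + s • w) w s := by
      simpa using ((hasDerivAt_id s).smul_const w).const_add u
    have := (((hg _).hasFDerivAt.comp_hasDerivAt s hline).sub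
      ((hasDerivAt_id s).mul_const ⟪g' u, w⟫)).sub
      (((hasDerivAt_pow 2 s).const_mul (L / 2)).mul_const (‖w‖ ^ 2))
    refine this.congr_deriv ?_
    simp only [InnerProductSpace.toDual_apply_apply]
    ring
  have hanti : AntitoneOn φ (Set.Icc 0 1) := by
    refine antitoneOn_of_hasDerivWithinAt_nonpos (convex_Icc 0 1)
      (fun s _ => (hφ s).continuousAt.continuousWithinAt) (fun s _ => (hφ s).hasDerivWithinAt)
      fun s hs => ?_
    rw [interior_Icc] at hs
    calc ⟪g' (u + s • w), w⟫ - ⟪g' u, w⟫ - L * s * ‖w‖ ^ 2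
        = ⟪g' (u + s • w) - g' u, w⟫ - L * s * ‖w‖ ^ 2 := by rw [inner_sub_left]
      _ ≤ ‖g' (u + s • w) - g' u‖ * ‖w‖ - L * ‖(u + s • w) - u‖ * ‖w‖ := by
        rw [add_sub_cancel_left, norm_smul, Real.norm_of_nonneg hs.1.le]
        linarith [real_inner_le_norm (g' (u + s • w) - g' u) w]
      _ ≤ 0 := by
        rw [← sub_mul]
        exact mul_nonpos_of_nonpos_of_nonneg (sub_nonpos.2 (hLip _ _)) (norm_nonneg w)
  have := hanti (Set.left_mem_Icc.2 zero_le_one) (Set.right_mem_Icc.2 zero_le_one) zero_le_one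
  simp only [φ, one_smul, zero_smul, add_zero, w, add_sub_cancel] at this
  linarith

theorem StrongConvexOn.add_sq_le_of_isMinOn {f : E → ℝ} {m : ℝ} {a : E}
    (hf : StrongConvexOn Set.univ m f) (ha : IsMinOn f Set.univ a) (z : E) :
    f a + m / 2 * ‖z - a‖ ^ 2 ≤ f z := by
  -- strong convexity on the segment `[a, z]` against minimality at `a`, divided by `θ`
  have hθ : ∀ θ ∈ Set.Ioo (0 : ℝ) 1, f a + m / 2 * (1 - θ) * ‖z - a‖ ^ 2 ≤ f z := by
    rintro θ ⟨hθ0, hθ1⟩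
    have hcomb := hf.2 (Set.mem_univ z) (Set.mem_univ a) hθ0.le (sub_nonneg.2 hθ1.le)
      (add_sub_cancel θ 1)
    have hmin := ha (Set.mem_univ (θ • z + (1 - θ) • a))
    simp only [smul_eq_mul, Set.mem_ofPred_eq] at hcomb hmin
    nlinarith
  have hlim : Tendsto (fun θ : ℝ => f a + m / 2 * (1 - θ) * ‖z - a‖ ^ 2)
      (nhdsWithin 0 (Set.Ioi 0)) (nhds (f a + m / 2 * ‖z - a‖ ^ 2)) :=
    tendsto_nhdsWithin_of_tendsto_nhds (Continuous.tendsto' (by fun_prop) 0 _ (by simp))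
  exact le_of_tendsto hlim (eventually_of_mem (Ioo_mem_nhdsGT one_pos) hθ)

/-- A block of the augmented Lagrangian; the `x_k`-update minimises it in `z`. -/
noncomputable def localLagrangian (g : E → ℝ) (ρ : ℝ) (y x0 z : E) : ℝ :=
  g z + ⟪y, z - x0⟫ + ρ / 2 * ‖z - x0‖ ^ 2

theorem hasGradientAt_localLagrangian [CompleteSpace E] {g : E → ℝ} {g'a a : E}
    (hg : HasGradientAt g g'a a) (ρ : ℝ) (y x0 : E) :
    HasGradientAt (localLagrangian g ρ y x0) (g'a + y + ρ • (a - x0)) a := by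
  rw [hasGradientAt_iff_hasFDerivAt]
  have hshift : HasFDerivAt (fun z : E => z - x0) (ContinuousLinearMap.id ℝ E) a :=
    (hasFDerivAt_id a).sub_const x0
  have := ((hasGradientAt_iff_hasFDerivAt.1 hg).add
    ((innerSL ℝ y).hasFDerivAt.comp a hshift)).add (hshift.norm_sq.const_mul (ρ / 2))
  refine this.congr_fderiv (ContinuousLinearMap.ext fun v => ?_)
  simp only [ContinuousLinearMap.comp_id, add_apply, smul_apply,
    InnerProductSpace.toDual_apply_apply, innerSL_apply_apply, inner_add_left,
    real_inner_smul_left, nsmul_eq_mul, smul_eq_mul]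
  ring

theorem add_smul_eq_neg_of_isMinOn_localLagrangian [CompleteSpace E] {g : E → ℝ}
    {g'a a : E} (hg : HasGradientAt g g'a a) {ρ : ℝ} {y x0 : E}
    (hmin : IsMinOn (localLagrangian g ρ y x0) Set.univ a) :
    y + ρ • (a - x0) = -g'a := by
  have h := (hmin.isLocalMin Filter.univ_mem).hasFDerivAt_eq_zero
    (hasGradientAt_iff_hasFDerivAt.1 (hasGradientAt_localLagrangian hg ρ y x0))
  rw [LinearIsometryEquiv.map_eq_zero_iff, add_assoc] at h
  exact eq_neg_of_add_eq_zero_right h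

theorem strongConvexOn_localLagrangian {g : E → ℝ} {ρ γ : ℝ}
    (hg : StrongConvexOn Set.univ γ fun z => g z + ρ / 2 * ‖z‖ ^ 2) (y x0 : E) :
    StrongConvexOn Set.univ γ (localLagrangian g ρ y x0) := by
  rw [strongConvexOn_iff_convex] at hg ⊢
  have haff : ConvexOn ℝ Set.univ fun z : E => ⟪y - ρ • x0, z⟫ + (ρ / 2 * ‖x0‖ ^ 2 - ⟪y, x0⟫) :=
    ((innerₗ E (y - ρ • x0)).convexOn convex_univ).add_const _
  refine (hg.add haff).congr fun z _ => ?_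
  simp only [Pi.add_apply, localLagrangian, inner_sub_left, inner_sub_right,
    real_inner_smul_left, norm_sub_sq_real, real_inner_comm x0 z]
  ring

theorem apply_le_localLagrangian_of_eq_neg_gradient [CompleteSpace E] {g : E → ℝ}
    {g' : E → E} {L ρ : ℝ} (hg : ∀ z, HasGradientAt g (g' z) z)
    (hLip : ∀ u v, ‖g' u - g' v‖ ≤ L * ‖u - v‖) (hLρ : L ≤ ρ) {a y : E} (hy : y = -g' a)
    (x0 : E) :
    g x0 ≤ localLagrangian g ρ y x0 a := by
  have hdescent := le_add_inner_add_sq_of_lipschitz_gradient hg hLip a x0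
  have hinner : ⟪g' a, x0 - a⟫ = ⟪y, a - x0⟫ := by
    rw [hy, inner_neg_left, ← inner_neg_right, neg_sub]
  rw [hinner, norm_sub_rev] at hdescent
  unfold localLagrangian
  nlinarith [sq_nonneg ‖a - x0‖]

theorem localLagrangian_dual_step_le [CompleteSpace E] {g : E → ℝ} {g' : E → E} {L ρ γ : ℝ}
    (hg : ∀ z, HasGradientAt g (g' z) z) (hLip : ∀ u v, ‖g' u - g' v‖ ≤ L * ‖u - v‖)
    (hρ : 0 < ρ) (hstrong : StrongConvexOn Set.univ γ fun z => g z + ρ / 2 * ‖z‖ ^ 2)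
    (hργ : 2 * L ^ 2 ≤ ρ * γ) {y x0 a b : E}
    (hmin : IsMinOn (localLagrangian g ρ y x0) Set.univ a) (hy : y = -g' b) :
    localLagrangian g ρ (y + ρ • (a - x0)) x0 a ≤ localLagrangian g ρ y x0 b := by
  have hgrowth := (strongConvexOn_localLagrangian hstrong y x0).add_sq_le_of_isMinOn hmin b
  have hdual_step : localLagrangian g ρ (y + ρ • (a - x0)) x0 a
      = localLagrangian g ρ y x0 a + ρ * ‖a - x0‖ ^ 2 := by
    simp only [localLagrangian, inner_add_left, real_inner_smul_left, real_inner_self_eq_norm_sq]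
    ring
  have hdual_eq : ρ • (a - x0) = g' b - g' a := by
    rw [← add_sub_cancel_left y (ρ • (a - x0)),
      add_smul_eq_neg_of_isMinOn_localLagrangian (hg a) hmin, hy, neg_sub_neg]
  have hdual_sq : ρ ^ 2 * ‖a - x0‖ ^ 2 ≤ L ^ 2 * ‖b - a‖ ^ 2 := by
    have hnorm := congrArg norm hdual_eq
    rw [norm_smul, Real.norm_of_nonneg hρ.le] at hnorm
    rw [← mul_pow, ← mul_pow, hnorm]
    exact pow_le_pow_left₀ (norm_nonneg _) (hLip b a) 2
  have hrest : ρ * ‖a - x0‖ ^ 2 ≤ γ / 2 * ‖b - a‖ ^ 2 := by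
    refine le_of_mul_le_mul_left ?_ hρ
    nlinarith [sq_nonneg ‖b - a‖]
  linarith

end InnerProductSpace

section Consensus

variable {N K : ℕ} {g : Fin K → EuclideanSpace ℝ (Fin N) → ℝ} {h : EuclideanSpace ℝ (Fin N) → ℝ}
  {ρ : Fin K → ℝ} {xk xk' y y' : Fin K → EuclideanSpace ℝ (Fin N)} {x0 : EuclideanSpace ℝ (Fin N)}

theorem augL_eq_add_sum_localLagrangian :
    augL g h ρ xk x0 y = h x0 + ∑ k, localLagrangian (g k) (ρ k) (y k) x0 (xk k) := by
  simp only [augL, localLagrangian, Finset.sum_add_distrib]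
  ring

theorem augL_le_augL
    (hle : ∀ k, localLagrangian (g k) (ρ k) (y k) x0 (xk k)
      ≤ localLagrangian (g k) (ρ k) (y' k) x0 (xk' k)) :
    augL g h ρ xk x0 y ≤ augL g h ρ xk' x0 y' := by
  rw [augL_eq_add_sum_localLagrangian, augL_eq_add_sum_localLagrangian]
  gcongr with k
  exact hle k

theorem sum_add_le_augL (hle : ∀ k, g k x0 ≤ localLagrangian (g k) (ρ k) (y k) x0 (xk k)) :
    (∑ k, g k x0) + h x0 ≤ augL g h ρ xk x0 y := by
  rw [augL_eq_add_sum_localLagrangian, add_comm]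
  gcongr with k
  exact hle k

end Consensus

theorem forall_one_le_of_updated_or_kept {α : Type*} {C : ℕ → Finset α} {j : α} (hj : j ∈ C 1)
    {P : ℕ → Prop} (hupd : ∀ t, j ∈ C (t + 1) → P (t + 1))
    (hkeep : ∀ t, j ∉ C (t + 1) → P t → P (t + 1)) :
    ∀ t, 1 ≤ t → P t := by
  intro t ht
  induction t, ht using Nat.le_induction with
  | base => exact hupd 0 hj
  | succ t _ ih => exact (em (j ∈ C (t + 1))).elim (hupd t) fun hj' => hkeep t hj' ih

theorem exists_tendsto_of_succ_le_of_le {u : ℕ → ℝ} {m : ℝ} {n₀ : ℕ}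
    (hdec : ∀ t, n₀ ≤ t → u (t + 1) ≤ u t) (hbdd : ∀ t, n₀ ≤ t → m ≤ u t) :
    ∃ l, m ≤ l ∧ Tendsto u atTop (nhds l) := by
  set v : ℕ → ℝ := fun n => u (n + n₀)
  have hanti : Antitone v :=
    antitone_nat_of_succ_le fun n => by simpa only [v, add_right_comm] using hdec _ le_add_self
  have hv : ∀ n, m ≤ v n := fun n => hbdd _ le_add_self
  refine ⟨⨅ n, v n, le_ciInf hv, (tendsto_add_atTop_iff_nat n₀).1 ?_⟩
  exact tendsto_atTop_ciInf hanti ⟨m, by rintro _ ⟨n, rfl⟩; exact hv n⟩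

theorem lemma2_3_general
    {N K : ℕ}
    (g : Fin K → EuclideanSpace ℝ (Fin N) → ℝ)
    (g' : Fin K → EuclideanSpace ℝ (Fin N) → EuclideanSpace ℝ (Fin N))
    (h : EuclideanSpace ℝ (Fin N) → ℝ)
    (X : Set (EuclideanSpace ℝ (Fin N)))
    (Lg ρ γ : Fin K → ℝ)
    (x : ℕ → Fin K → EuclideanSpace ℝ (Fin N))
    (x0 : ℕ → EuclideanSpace ℝ (Fin N))
    (y : ℕ → Fin K → EuclideanSpace ℝ (Fin N))
    (C : ℕ → Finset (Option (Fin K)))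
    -- Assumption A1
    (hgrad : ∀ k z, HasGradientAt (g k) (g' k z) z)
    (hLip : ∀ k u v, ‖g' k u - g' k v‖ ≤ Lg k * ‖u - v‖)
    (hρ : ∀ k, 0 < ρ k)
    -- Assumption A2
    (hstrong : ∀ k, StrongConvexOn Set.univ (γ k)
      (fun z : EuclideanSpace ℝ (Fin N) => g k z + ρ k / 2 * ‖z‖ ^ 2))
    (hA2b : ∀ k, 2 * Lg k ^ 2 < ρ k * γ k)
    (hA2c : ∀ k, Lg k ≤ ρ k)
    -- Assumption A3 : `f` is bounded below over `X`
    (hbdd : BddBelow ((fun z => (∑ k, g k z) + h z) '' X))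
    -- Algorithm 2
    (hC1 : C 1 = Finset.univ)
    (hx0upd : ∀ t : ℕ,
      (none ∈ C (t + 1) → x0 (t + 1) ∈ X ∧ ∀ z ∈ X,
        augL g h ρ (x t) (x0 (t + 1)) (y t) ≤ augL g h ρ (x t) z (y t)) ∧
      (none ∉ C (t + 1) → x0 (t + 1) = x0 t))
    (hxupd : ∀ (t : ℕ) (k : Fin K),
      (some k ∈ C (t + 1) → ∀ z : EuclideanSpace ℝ (Fin N),
        g k (x (t + 1) k) + ⟪y t k, x (t + 1) k - x0 (t + 1)⟫
            + ρ k / 2 * ‖x (t + 1) k - x0 (t + 1)‖ ^ 2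
          ≤ g k z + ⟪y t k, z - x0 (t + 1)⟫ + ρ k / 2 * ‖z - x0 (t + 1)‖ ^ 2) ∧
      (some k ∉ C (t + 1) → x (t + 1) k = x t k))
    (hyupd : ∀ (t : ℕ) (k : Fin K),
      (some k ∈ C (t + 1) → y (t + 1) k = y t k + ρ k • (x (t + 1) k - x0 (t + 1))) ∧
      (some k ∉ C (t + 1) → y (t + 1) k = y t k))
    :
    (∀ t : ℕ, 1 ≤ t →
      sInf ((fun z => (∑ k, g k z) + h z) '' X)
          ≤ (∑ k, g k (x0 (t + 1))) + h (x0 (t + 1)) ∧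
      (∑ k, g k (x0 (t + 1))) + h (x0 (t + 1))
          ≤ augL g h ρ (x (t + 1)) (x0 (t + 1)) (y (t + 1))) ∧
    (∀ T : ℕ, 1 ≤ T →
      (∀ (t : ℕ) (j : Option (Fin K)), ∃ i, 1 ≤ i ∧ i ≤ T ∧ j ∈ C (t + i)) →
      (∀ t : ℕ, 1 ≤ t →
        augL g h ρ (x (t + 1)) (x0 (t + 1)) (y (t + 1))
          ≤ augL g h ρ (x t) (x0 t) (y t)) ∧
      ∃ Lc : ℝ, sInf ((fun z => (∑ k, g k z) + h z) '' X) ≤ Lc ∧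
        Tendsto (fun t => augL g h ρ (x t) (x0 t) (y t)) atTop (nhds Lc)) := by
  set F := fun z => (∑ k, g k z) + h z
  have hx0_mem : ∀ t, 1 ≤ t → x0 t ∈ X :=
    forall_one_le_of_updated_or_kept (hC1 ▸ Finset.mem_univ none)
      (fun t h0 => ((hx0upd t).1 h0).1) fun t h0 hmem => (hx0upd t).2 h0 ▸ hmem
  have hy_eq : ∀ t, 1 ≤ t → ∀ k, y t k = -g' k (x t k) := fun t ht k =>
    forall_one_le_of_updated_or_kept (P := fun t => y t k = -g' k (x t k))
      (hC1 ▸ Finset.mem_univ (some k))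
      (fun t hk => by
        rw [(hyupd t k).1 hk]
        exact add_smul_eq_neg_of_isMinOn_localLagrangian (hgrad k _)
          fun z _ => (hxupd t k).1 hk z)
      (fun t hk hy => by rw [(hyupd t k).2 hk, (hxupd t k).2 hk, hy]) t ht
  have hF_le : ∀ t, 1 ≤ t → F (x0 t) ≤ augL g h ρ (x t) (x0 t) (y t) := fun t ht =>
    sum_add_le_augL fun k => apply_le_localLagrangian_of_eq_neg_gradient (hgrad k) (hLip k)
      (hA2c k) (hy_eq t ht k) _
  have hinf_le : ∀ t, 1 ≤ t → sInf (F '' X) ≤ F (x0 t) := fun t ht =>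
    csInf_le hbdd (Set.mem_image_of_mem F (hx0_mem t ht))
  have hdec : ∀ t, 1 ≤ t →
      augL g h ρ (x (t + 1)) (x0 (t + 1)) (y (t + 1)) ≤ augL g h ρ (x t) (x0 t) (y t) := by
    intro t ht
    have hblocks : augL g h ρ (x (t + 1)) (x0 (t + 1)) (y (t + 1))
        ≤ augL g h ρ (x t) (x0 (t + 1)) (y t) := augL_le_augL fun k => by
      by_cases hk : some k ∈ C (t + 1)
      · rw [(hyupd t k).1 hk]
        exact localLagrangian_dual_step_le (hgrad k) (hLip k) (hρ k) (hstrong k) (hA2b k).le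
          (fun z _ => (hxupd t k).1 hk z) (hy_eq t ht k)
      · rw [(hxupd t k).2 hk, (hyupd t k).2 hk]
    refine hblocks.trans ?_
    by_cases h0 : none ∈ C (t + 1)
    · exact ((hx0upd t).1 h0).2 _ (hx0_mem t ht)
    · rw [(hx0upd t).2 h0]
  refine ⟨fun t ht => ⟨hinf_le _ (by omega), hF_le _ (by omega)⟩, fun T _ _ => ⟨hdec, ?_⟩⟩
  exact exists_tendsto_of_succ_le_of_le hdec fun t ht => (hinf_le t ht).trans (hF_le t ht)

/-- **Lemma 2.3.**  For the flexible ADMM (Algorithm 2) on the consensus problem, under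
Assumptions A1–A3, for every `t ≥ 1` the augmented Lagrangian satisfies
`L({x^{t+1}}, x_0^{t+1}; y^{t+1}) ≥ f(x_0^{t+1}) ≥ f̄`; consequently, under the period-`T`
essentially cyclic rule, `t ↦ L({x^t}, x_0^t; y^t)` is nonincreasing for `t ≥ 1` and converges
to a limit `≥ f̄`, where `f̄ = inf_{z ∈ X} f(z)`. -/
theorem lemma2_3
    {N K : ℕ} (hK : 1 ≤ K)
    (g : Fin K → EuclideanSpace ℝ (Fin N) → ℝ)
    (g' : Fin K → EuclideanSpace ℝ (Fin N) → EuclideanSpace ℝ (Fin N))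
    (h : EuclideanSpace ℝ (Fin N) → ℝ)
    (X : Set (EuclideanSpace ℝ (Fin N)))
    (Lg ρ γ : Fin K → ℝ)
    (x : ℕ → Fin K → EuclideanSpace ℝ (Fin N))
    (x0 : ℕ → EuclideanSpace ℝ (Fin N))
    (y : ℕ → Fin K → EuclideanSpace ℝ (Fin N))
    (C : ℕ → Finset (Option (Fin K)))
    -- Assumption A1
    (hgrad : ∀ k z, HasGradientAt (g k) (g' k z) z)
    (hLpos : ∀ k, 0 < Lg k)
    (hLip : ∀ k u v, ‖g' k u - g' k v‖ ≤ Lg k * ‖u - v‖)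
    (hconv : ConvexOn ℝ Set.univ h)
    (hXne : X.Nonempty) (hXcl : IsClosed X) (hXcv : Convex ℝ X)
    (hρ : ∀ k, 0 < ρ k)
    -- Assumption A2
    (hγpos : ∀ k, 0 < γ k)
    (hstrong : ∀ k, StrongConvexOn Set.univ (γ k)
      (fun z : EuclideanSpace ℝ (Fin N) => g k z + ρ k / 2 * ‖z‖ ^ 2))
    (hA2b : ∀ k, 2 * Lg k ^ 2 < ρ k * γ k)
    (hA2c : ∀ k, Lg k ≤ ρ k)
    -- Assumption A3 : `f` is bounded below over `X`
    (hbdd : BddBelow ((fun z => (∑ k, g k z) + h z) '' X))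
    -- Algorithm 2
    (hC1 : C 1 = Finset.univ)
    (hx0upd : ∀ t : ℕ,
      (none ∈ C (t + 1) → x0 (t + 1) ∈ X ∧ ∀ z ∈ X,
        augL g h ρ (x t) (x0 (t + 1)) (y t) ≤ augL g h ρ (x t) z (y t)) ∧
      (none ∉ C (t + 1) → x0 (t + 1) = x0 t))
    (hxupd : ∀ (t : ℕ) (k : Fin K),
      (some k ∈ C (t + 1) → ∀ z : EuclideanSpace ℝ (Fin N),
        g k (x (t + 1) k) + ⟪y t k, x (t + 1) k - x0 (t + 1)⟫
            + ρ k / 2 * ‖x (t + 1) k - x0 (t + 1)‖ ^ 2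
          ≤ g k z + ⟪y t k, z - x0 (t + 1)⟫ + ρ k / 2 * ‖z - x0 (t + 1)‖ ^ 2) ∧
      (some k ∉ C (t + 1) → x (t + 1) k = x t k))
    (hyupd : ∀ (t : ℕ) (k : Fin K),
      (some k ∈ C (t + 1) → y (t + 1) k = y t k + ρ k • (x (t + 1) k - x0 (t + 1))) ∧
      (some k ∉ C (t + 1) → y (t + 1) k = y t k))
    :
    (∀ t : ℕ, 1 ≤ t →
      sInf ((fun z => (∑ k, g k z) + h z) '' X)
          ≤ (∑ k, g k (x0 (t + 1))) + h (x0 (t + 1)) ∧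
      (∑ k, g k (x0 (t + 1))) + h (x0 (t + 1))
          ≤ augL g h ρ (x (t + 1)) (x0 (t + 1)) (y (t + 1))) ∧
    (∀ T : ℕ, 1 ≤ T →
      (∀ (t : ℕ) (j : Option (Fin K)), ∃ i, 1 ≤ i ∧ i ≤ T ∧ j ∈ C (t + i)) →
      (∀ t : ℕ, 1 ≤ t →
        augL g h ρ (x (t + 1)) (x0 (t + 1)) (y (t + 1))
          ≤ augL g h ρ (x t) (x0 t) (y t)) ∧
      ∃ Lc : ℝ, sInf ((fun z => (∑ k, g k z) + h z) '' X) ≤ Lc ∧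
        Tendsto (fun t => augL g h ρ (x t) (x0 t) (y t)) atTop (nhds Lc)) :=
  lemma2_3_general g g' h X Lg ρ γ x x0 y C hgrad hLip hρ hstrong hA2b hA2c hbdd hC1 hx0upd hxupd
    hyupd
end

section
/- (Inequality (2.33) in the proof of Theorem 2.2) Let the sequences {x_k^t}, {x_0^t}, {y_k^t} be generated by the classical ADMM (Algorithm 1) for the consensus problem, with ∇g_k Lipschitz continuous with constant L_k > 0. Then for every t ≥ 1 and every k = 1,…,K: ‖∇g_k(x_k^t) + y_k^t + ρ_k(x_k^t − x_0^t)‖ ≤ (L_k + ρ_k)‖x_k^t − x_k^{t+1}‖ + ρ_k‖x_0^t − x_0^{t+1}‖; that is, the partial gradient of the augmented Lagrangian with respect to x_k at the iterate ({x_k^t}, x_0^t, y^t) is bounded by (L_k + ρ_k)‖x_k^t − x_k^{t+1}‖ + ρ_k‖x_0^t − x_0^{t+1}‖. -/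
open Filter
open scoped RealInnerProductSpace BigOperators

open Filter
open scoped RealInnerProductSpace

private lemma foc_lemma {E : Type*} [NormedAddCommGroup E] [InnerProductSpace ℝ E]
    [CompleteSpace E] (g : E → ℝ) (g' : E → E) (hg : ∀ z, HasGradientAt g (g' z) z)
    (a c w : E) (ρ : ℝ)
    (hmin : ∀ z, g w + ⟪a, w - c⟫ + ρ / 2 * ‖w - c‖ ^ 2
      ≤ g z + ⟪a, z - c⟫ + ρ / 2 * ‖z - c‖ ^ 2) :
    g' w + a + ρ • (w - c) = 0 := by
  set F : E → ℝ := fun z => g z + ⟪a, z - c⟫ + ρ / 2 * ‖z - c‖ ^ 2 with hF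
  have h1 : HasFDerivAt g (InnerProductSpace.toDual ℝ E (g' w)) w :=
    (hg w).hasFDerivAt
  have hid : HasFDerivAt (fun z : E => z - c) (ContinuousLinearMap.id ℝ E) w :=
    (hasFDerivAt_id w).sub_const c
  have h2 : HasFDerivAt (fun z : E => ⟪a, z - c⟫)
      ((innerSL ℝ a).comp (ContinuousLinearMap.id ℝ E)) w :=
    (innerSL ℝ a).hasFDerivAt.comp w hid
  have h3 : HasFDerivAt (fun z : E => ‖z - c‖ ^ 2)
      (2 • (innerSL ℝ (w - c)).comp (ContinuousLinearMap.id ℝ E)) w :=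
    hid.norm_sq
  have hFd : HasFDerivAt F
      (InnerProductSpace.toDual ℝ E (g' w)
        + (innerSL ℝ a).comp (ContinuousLinearMap.id ℝ E)
        + (ρ / 2) • (2 • (innerSL ℝ (w - c)).comp (ContinuousLinearMap.id ℝ E))) w :=
    (h1.add h2).add (h3.const_smul (ρ / 2))
  have hloc : IsLocalMin F w := Filter.Eventually.of_forall hmin
  have hzero := hloc.hasFDerivAt_eq_zero hFd
  set v := g' w + a + ρ • (w - c) with hv
  have hev := DFunLike.congr_fun hzero v
  simp only [ContinuousLinearMap.add_apply, ContinuousLinearMap.smul_apply,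
    ContinuousLinearMap.coe_smul', Pi.smul_apply, ContinuousLinearMap.coe_comp',
    Function.comp_apply, ContinuousLinearMap.coe_id', id_eq, innerSL_apply_apply,
    nsmul_eq_mul, Nat.cast_ofNat,
    InnerProductSpace.toDual_apply_apply, ContinuousLinearMap.zero_apply, smul_eq_mul] at hev
  have : ⟪v, v⟫ = 0 := by
    rw [hv]
    simp only [inner_add_left, real_inner_smul_left]
    linarith [hev]
  exact inner_self_eq_zero.mp this

/-- **Inequality (2.33)** in the proof of Theorem 2.2.  For the classical ADMM
(Algorithm 1) on the consensus problem, for every `t ≥ 1` and `k`: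
`‖∇_{x_k} L({x^t_k}, x_0^t; y^t)‖ = ‖∇g_k(x_k^t) + y_k^t + ρ_k(x_k^t − x_0^t)‖
  ≤ (L_k + ρ_k)‖x_k^t − x_k^{t+1}‖ + ρ_k‖x_0^t − x_0^{t+1}‖`. -/
theorem ineq2_33
    {N K : ℕ} (hK : 1 ≤ K)
    (g : Fin K → EuclideanSpace ℝ (Fin N) → ℝ)
    (g' : Fin K → EuclideanSpace ℝ (Fin N) → EuclideanSpace ℝ (Fin N))
    (h : EuclideanSpace ℝ (Fin N) → ℝ)
    (X : Set (EuclideanSpace ℝ (Fin N)))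
    (Lg ρ : Fin K → ℝ)
    (x : ℕ → Fin K → EuclideanSpace ℝ (Fin N))
    (x0 : ℕ → EuclideanSpace ℝ (Fin N))
    (y : ℕ → Fin K → EuclideanSpace ℝ (Fin N))
    -- data assumptions
    (hgrad : ∀ k z, HasGradientAt (g k) (g' k z) z)
    (hLpos : ∀ k, 0 < Lg k)
    (hLip : ∀ k u v, ‖g' k u - g' k v‖ ≤ Lg k * ‖u - v‖)
    (hconv : ConvexOn ℝ Set.univ h)
    (hXne : X.Nonempty) (hXcl : IsClosed X) (hXcv : Convex ℝ X)
    (hρ : ∀ k, 0 < ρ k)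
    -- Algorithm 1 (classical ADMM)
    (hx0upd : ∀ t : ℕ, x0 (t + 1) ∈ X ∧ ∀ z ∈ X,
      augL g h ρ (x t) (x0 (t + 1)) (y t) ≤ augL g h ρ (x t) z (y t))
    (hxupd : ∀ (t : ℕ) (k : Fin K) (z : EuclideanSpace ℝ (Fin N)),
      g k (x (t + 1) k) + ⟪y t k, x (t + 1) k - x0 (t + 1)⟫
          + ρ k / 2 * ‖x (t + 1) k - x0 (t + 1)‖ ^ 2
        ≤ g k z + ⟪y t k, z - x0 (t + 1)⟫ + ρ k / 2 * ‖z - x0 (t + 1)‖ ^ 2)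
    (hyupd : ∀ (t : ℕ) (k : Fin K),
      y (t + 1) k = y t k + ρ k • (x (t + 1) k - x0 (t + 1))) :
    ∀ t : ℕ, 1 ≤ t → ∀ k : Fin K,
      ‖g' k (x t k) + y t k + ρ k • (x t k - x0 t)‖
        ≤ (Lg k + ρ k) * ‖x t k - x (t + 1) k‖ + ρ k * ‖x0 t - x0 (t + 1)‖ := by

  intro t ht k
  obtain ⟨s, rfl⟩ : ∃ s, t = s + 1 := ⟨t - 1, (Nat.succ_pred_eq_of_pos ht).symm⟩
  have e1 : g' k (x (s + 1) k) + y s k + ρ k • (x (s + 1) k - x0 (s + 1)) = 0 :=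
    foc_lemma (g k) (g' k) (hgrad k) (y s k) (x0 (s + 1)) (x (s + 1) k) (ρ k)
      (fun z => hxupd s k z)
  have e2 : g' k (x (s + 2) k) + y (s + 1) k + ρ k • (x (s + 2) k - x0 (s + 2)) = 0 :=
    foc_lemma (g k) (g' k) (hgrad k) (y (s + 1) k) (x0 (s + 2)) (x (s + 2) k) (ρ k)
      (fun z => hxupd (s + 1) k z)
  have key : g' k (x (s + 1) k) + y (s + 1) k + ρ k • (x (s + 1) k - x0 (s + 1))
      = ρ k • (x (s + 1) k - x (s + 2) k)
        + (g' k (x (s + 1) k) - g' k (x (s + 2) k))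
        + ρ k • (x0 (s + 2) - x0 (s + 1)) := by
    have hident : (g' k (x (s + 1) k) + y (s + 1) k + ρ k • (x (s + 1) k - x0 (s + 1)))
        - (ρ k • (x (s + 1) k - x (s + 2) k)
          + (g' k (x (s + 1) k) - g' k (x (s + 2) k))
          + ρ k • (x0 (s + 2) - x0 (s + 1)))
        = g' k (x (s + 2) k) + y (s + 1) k + ρ k • (x (s + 2) k - x0 (s + 2)) := by
      module
    have := hident.trans e2
    exact sub_eq_zero.mp this
  rw [key]
  have hρ' : 0 < ρ k := hρ k
  have b1 : ‖ρ k • (x (s + 1) k - x (s + 2) k)‖ = ρ k * ‖x (s + 1) k - x (s + 2) k‖ := by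
    rw [norm_smul, Real.norm_eq_abs, abs_of_pos hρ']
  have b3 : ‖ρ k • (x0 (s + 2) - x0 (s + 1))‖ = ρ k * ‖x0 (s + 1) - x0 (s + 2)‖ := by
    rw [norm_smul, Real.norm_eq_abs, abs_of_pos hρ', norm_sub_rev]
  have b2 : ‖g' k (x (s + 1) k) - g' k (x (s + 2) k)‖ ≤ Lg k * ‖x (s + 1) k - x (s + 2) k‖ :=
    hLip k _ _
  calc ‖ρ k • (x (s + 1) k - x (s + 2) k) + (g' k (x (s + 1) k) - g' k (x (s + 2) k))
        + ρ k • (x0 (s + 2) - x0 (s + 1))‖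
      ≤ ‖ρ k • (x (s + 1) k - x (s + 2) k)‖ + ‖g' k (x (s + 1) k) - g' k (x (s + 2) k)‖
        + ‖ρ k • (x0 (s + 2) - x0 (s + 1))‖ := norm_add₃_le
    _ ≤ (Lg k + ρ k) * ‖x (s + 1) k - x (s + 1 + 1) k‖ + ρ k * ‖x0 (s + 1) - x0 (s + 1 + 1)‖ := by
        rw [b1, b3]
        have : (s + 1 + 1) = s + 2 := rfl
        rw [this]
        nlinarith [b2, norm_nonneg (x (s + 1) k - x (s + 2) k)]
end
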